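/- Let V be a contiguous vtree over ordered variables X_1,…,X_n and let [a,b] be any interval. Let C_{a:b} be the set of ⊆-maximal nodes v of V whose covered interval is contained in {X_a,…,X_b}. Then for every depth level k of V, the set C_{a:b} contains at most 4 nodes at depth k; hence |C_{a:b}| ≤ 4d where d is the depth of V. -/

import Mathlib

open scoped BigOperators

/-! ### Probabilistic circuits

A probabilistic circuit is a rooted DAG of leaf, sum and product nodes.  We represent the
DAG by a finite sequence of nodes; well-formedness (`PC.WF`) requires that the children of
every node have strictly smaller index, and the root is the node of largest index. -/

inductive PCNode (ι : Type) (Val : ι → Type) (N : ℕ) where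
  | leaf (v : ι) (f : Val v → ℝ)
  | sum (ch : List (Fin N × ℝ))
  | prod (ch : List (Fin N))

namespace PCNode

variable {ι : Type} {Val : ι → Type} {N : ℕ}

def children : PCNode ι Val N → List (Fin N)
  | .leaf _ _ => []
  | .sum ch => ch.map Prod.fst
  | .prod ch => ch

def childCount : PCNode ι Val N → ℕ
  | .leaf _ _ => 0
  | .sum ch => ch.length
  | .prod ch => ch.length

def isProdB : PCNode ι Val N → Bool
  | .prod _ => true
  | _ => false

end PCNode

structure PC (ι : Type) (Val : ι → Type) where
  numNodes : ℕ
  node : Fin numNodes → PCNode ι Val numNodes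

namespace PC

variable {ι : Type} {Val : ι → Type}

/-- Acyclicity: every edge goes from a larger to a strictly smaller index. -/
def WF (C : PC ι Val) : Prop :=
  ∀ i : Fin C.numNodes, ∀ j ∈ (C.node i).children, (j : ℕ) < (i : ℕ)

/-- Fuelled evaluation of a node; for a well-formed circuit, fuel `C.numNodes` always
suffices. -/
def evalFuel (C : PC ι Val) (x : ∀ i, Val i) : ℕ → Fin C.numNodes → ℝ
  | 0, _ => 0
  | k+1, i =>
    match C.node i with
    | .leaf v f => f (x v)
    | .sum ch => (ch.map fun p => p.2 * evalFuel C x k p.1).sum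
    | .prod ch => (ch.map fun j => evalFuel C x k j).prod

def nodeEval (C : PC ι Val) (x : ∀ i, Val i) (i : Fin C.numNodes) : ℝ :=
  evalFuel C x C.numNodes i

/-- The function computed by the circuit (the value of its root node). -/
def eval (C : PC ι Val) (x : ∀ i, Val i) : ℝ :=
  if h : 0 < C.numNodes then nodeEval C x ⟨C.numNodes - 1, by omega⟩ else 0

def scopeFuel [DecidableEq ι] (C : PC ι Val) : ℕ → Fin C.numNodes → Finset ι
  | 0, _ => ∅
  | k+1, i =>
    match C.node i with
    | .leaf v _ => {v}
    | .sum ch => (ch.map fun p => scopeFuel C k p.1).foldr (· ∪ ·) ∅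
    | .prod ch => (ch.map fun j => scopeFuel C k j).foldr (· ∪ ·) ∅

/-- The scope of a node: the set of variables its subcircuit depends on. -/
def scope [DecidableEq ι] (C : PC ι Val) (i : Fin C.numNodes) : Finset ι :=
  scopeFuel C C.numNodes i

def rootScope [DecidableEq ι] (C : PC ι Val) : Finset ι :=
  if h : 0 < C.numNodes then scope C ⟨C.numNodes - 1, by omega⟩ else ∅

/-- The size of a circuit: its number of edges. -/
def numEdges (C : PC ι Val) : ℕ :=
  ∑ i : Fin C.numNodes, (C.node i).childCount

def depthFuel (C : PC ι Val) : ℕ → Fin C.numNodes → ℕ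
  | 0, _ => 0
  | k+1, i =>
    match C.node i with
    | .leaf _ _ => 0
    | .sum ch => (ch.map fun p => depthFuel C k p.1 + 1).foldr max 0
    | .prod ch => (ch.map fun j => depthFuel C k j + 1).foldr max 0

/-- The depth of a circuit: the length of the longest root-to-leaf path. -/
def depth (C : PC ι Val) : ℕ :=
  if h : 0 < C.numNodes then depthFuel C C.numNodes ⟨C.numNodes - 1, by omega⟩ else 0

/-- All children of any sum node have the same scope. -/
def Smooth [DecidableEq ι] (C : PC ι Val) : Prop :=
  ∀ (i : Fin C.numNodes) (ch : List (Fin C.numNodes × ℝ)), C.node i = .sum ch →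
    ∀ p ∈ ch, ∀ q ∈ ch, scope C p.1 = scope C q.1

/-- The children of any product node have pairwise disjoint scopes. -/
def Decomposable [DecidableEq ι] (C : PC ι Val) : Prop :=
  ∀ (i : Fin C.numNodes) (ch : List (Fin C.numNodes)), C.node i = .prod ch →
    ch.Pairwise fun a b => Disjoint (scope C a) (scope C b)

/-- Sum-node weights and leaf functions are nonnegative. -/
def NonnegWeights (C : PC ι Val) : Prop :=
  (∀ (i : Fin C.numNodes) (ch : List (Fin C.numNodes × ℝ)), C.node i = .sum ch →
      ∀ p ∈ ch, 0 ≤ p.2) ∧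
  (∀ (i : Fin C.numNodes) (v : ι) (f : Val v → ℝ), C.node i = .leaf v f → ∀ a, 0 ≤ f a)

/-- The weights of every sum node sum to one. -/
def NormalizedSums (C : PC ι Val) : Prop :=
  ∀ (i : Fin C.numNodes) (ch : List (Fin C.numNodes × ℝ)), C.node i = .sum ch →
    (ch.map Prod.snd).sum = 1

/-- Every leaf computes a probability distribution over its variable. -/
def NormalizedLeaves [∀ i, Fintype (Val i)] (C : PC ι Val) : Prop :=
  ∀ (i : Fin C.numNodes) (v : ι) (f : Val v → ℝ), C.node i = .leaf v f → ∑ a, f a = 1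

/-- Sum/leaf and product nodes alternate: children of sums are products and children of
products are sums or leaves. -/
def Alternating (C : PC ι Val) : Prop :=
  (∀ (i : Fin C.numNodes) (ch : List (Fin C.numNodes × ℝ)), C.node i = .sum ch →
      ∀ p ∈ ch, (C.node p.1).isProdB = true) ∧
  (∀ (i : Fin C.numNodes) (ch : List (Fin C.numNodes)), C.node i = .prod ch →
      ∀ j ∈ ch, (C.node j).isProdB = false)

/-- For every input, at most one child of each sum node evaluates to a nonzero value. -/
def Deterministic (C : PC ι Val) : Prop :=
  ∀ (x : ∀ i, Val i) (i : Fin C.numNodes) (ch : List (Fin C.numNodes × ℝ)),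
    C.node i = .sum ch → ∀ p ∈ ch, ∀ q ∈ ch,
      nodeEval C x p.1 ≠ 0 → nodeEval C x q.1 ≠ 0 → p.1 = q.1

/-- The number of product nodes with a given scope. -/
def prodCount [DecidableEq ι] (C : PC ι Val) (S : Finset ι) : ℕ :=
  (Finset.univ.filter fun i : Fin C.numNodes =>
    (C.node i).isProdB = true ∧ scope C i = S).card

/-- The index of a product node within the product nodes sharing its scope. -/
def idxOf [DecidableEq ι] (C : PC ι Val) (i : Fin C.numNodes) : ℕ :=
  (Finset.univ.filter fun j : Fin C.numNodes =>
    (j : ℕ) < (i : ℕ) ∧ (C.node j).isProdB = true ∧ scope C j = scope C i).card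

/-- Bundle of basic "probabilistic circuit over all the variables" conditions:
well-formed DAG, nonnegative normalized weights, normalized leaves, alternation of
sum/leaf and product nodes, and the root depending on all variables. -/
def IsPCOver [DecidableEq ι] [Fintype ι] [∀ i, Fintype (Val i)] (C : PC ι Val) : Prop :=
  C.WF ∧ C.NonnegWeights ∧ C.NormalizedSums ∧ C.NormalizedLeaves ∧ C.Alternating ∧
    C.rootScope = Finset.univ

end PC

/-! ### Vtrees -/

inductive Vtree (ι : Type) where
  | leaf (x : ι)
  | node (l r : Vtree ι)
deriving DecidableEq

namespace Vtree

variable {ι : Type}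

def varsFinset [DecidableEq ι] : Vtree ι → Finset ι
  | .leaf x => {x}
  | .node l r => varsFinset l ∪ varsFinset r

def leavesList : Vtree ι → List ι
  | .leaf x => [x]
  | .node l r => leavesList l ++ leavesList r

/-- A vtree over a set `S` of variables: its leaves are in bijection with `S`. -/
def ValidOver (T : Vtree ι) (S : Set ι) : Prop :=
  T.leavesList.Nodup ∧ ∀ x : ι, x ∈ T.leavesList ↔ x ∈ S

def numNodesV : Vtree ι → ℕ
  | .leaf _ => 1
  | .node l r => numNodesV l + numNodesV r + 1

def IsChildOf (c p : Vtree ι) : Prop :=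
  match p with
  | .leaf _ => False
  | .node l r => c = l ∨ c = r

inductive IsSubtreeOf : Vtree ι → Vtree ι → Prop
  | refl (t : Vtree ι) : IsSubtreeOf t t
  | left {s l r : Vtree ι} : IsSubtreeOf s l → IsSubtreeOf s (.node l r)
  | right {s l r : Vtree ι} : IsSubtreeOf s r → IsSubtreeOf s (.node l r)

def subtreesList : Vtree ι → List (Vtree ι)
  | .leaf x => [.leaf x]
  | .node l r => .node l r :: (subtreesList l ++ subtreesList r)

def isNodeB : Vtree ι → Bool
  | .leaf _ => false
  | .node _ _ => true

/-- The inner (non-leaf) nodes of a vtree. -/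
def innerFinset [DecidableEq ι] (V : Vtree ι) : Finset (Vtree ι) :=
  (V.subtreesList.filter fun t => t.isNodeB).toFinset

def depthV : Vtree ι → ℕ
  | .leaf _ => 0
  | .node l r => max (depthV l) (depthV r) + 1

/-- The nodes of a vtree occurring at a given depth. -/
def atDepth : Vtree ι → ℕ → Set (Vtree ι)
  | t, 0 => {t}
  | .leaf _, _+1 => ∅
  | .node l r, k+1 => atDepth l k ∪ atDepth r k

theorem numNodesV_lt_of_isChildOf {c p : Vtree ι} (h : c.IsChildOf p) :
    c.numNodesV < p.numNodesV := by
  cases p with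
  | leaf x => exact h.elim
  | node l r =>
    rcases h with h | h <;> subst h <;> simp only [numNodesV] <;> omega

end Vtree

/-- The tree `V_{v → Z_v}`, viewed as a graph: vertices are the subtrees of `V`
(inner subtrees play the role of the latent variables `Z_v`, leaves the role of the
variables `X`), with edges between each node and its children. -/
def vtreeGraph {ι : Type} (V : Vtree ι) : SimpleGraph (Vtree ι) where
  Adj s t := (s.IsChildOf t ∨ t.IsChildOf s) ∧ s.IsSubtreeOf V ∧ t.IsSubtreeOf V
  symm := by
    constructor
    rintro s t ⟨h, hs, ht⟩
    exact ⟨h.symm, ht, hs⟩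
  loopless := by
    constructor
    rintro s ⟨h, -, -⟩
    rcases h with h | h <;>
      exact absurd (Vtree.numNodesV_lt_of_isChildOf h) (lt_irrefl _)

namespace PC

variable {ι : Type} {Val : ι → Type}

/-- Structured decomposability with respect to a vtree: every product node has exactly
two children, whose scopes are the variables of the two children of an inner node of the
vtree. -/
def StructuredBy [DecidableEq ι] (C : PC ι Val) (V : Vtree ι) : Prop :=
  ∀ (i : Fin C.numNodes) (ch : List (Fin C.numNodes)), C.node i = .prod ch →
    ∃ (c₁ c₂ : Fin C.numNodes) (l r : Vtree ι), ch = [c₁, c₂] ∧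
      (Vtree.node l r).IsSubtreeOf V ∧
      scope C c₁ = l.varsFinset ∧ scope C c₂ = r.varsFinset

/-- Generalized structured decomposability (for products with arbitrarily many children):
every product node decomposes the variables of some vtree node into the variables of a
family of its subtrees. -/
def StructuredByGen [DecidableEq ι] (C : PC ι Val) (V : Vtree ι) : Prop :=
  ∀ (i : Fin C.numNodes) (ch : List (Fin C.numNodes)), C.node i = .prod ch →
    ∃ u : Vtree ι, u.IsSubtreeOf V ∧
      (∀ j ∈ ch, ∃ s : Vtree ι, s.IsSubtreeOf u ∧ scope C j = s.varsFinset) ∧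
      (ch.map fun j => scope C j).foldr (· ∪ ·) ∅ = u.varsFinset

/-- The hidden state size: the maximum number of product nodes sharing the scope of an
inner vtree node. -/
def hiddenStateSize [DecidableEq ι] (C : PC ι Val) (V : Vtree ι) : ℕ :=
  V.innerFinset.sup fun t => prodCount C t.varsFinset

end PC

/-! ### Contiguity and linear vtrees (for variables `Fin n`) -/

def IsIntervalFin {n : ℕ} (S : Finset (Fin n)) : Prop :=
  ∃ a b : ℕ, ∀ i : Fin n, i ∈ S ↔ (a ≤ (i : ℕ) ∧ (i : ℕ) ≤ b)

def PC.ContiguousPC {n : ℕ} {Val : Fin n → Type} (C : PC (Fin n) Val) : Prop :=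
  ∀ i : Fin C.numNodes, IsIntervalFin (PC.scope C i)

def Vtree.ContiguousV {n : ℕ} (V : Vtree (Fin n)) : Prop :=
  ∀ t : Vtree (Fin n), t.IsSubtreeOf V → IsIntervalFin t.varsFinset

inductive Vtree.IsLinearFrom {n : ℕ} : ℕ → Vtree (Fin n) → Prop
  | single (a : ℕ) (ha : a < n) (h : a + 1 = n) : IsLinearFrom a (.leaf ⟨a, ha⟩)
  | cons (a : ℕ) (ha : a < n) (T : Vtree (Fin n)) (h : a + 1 < n) :
      IsLinearFrom (a+1) T → IsLinearFrom a (.node (.leaf ⟨a, ha⟩) T)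

/-- The (right-)linear vtree, splitting `{Xᵢ}` from `{Xᵢ₊₁, …, Xₙ}` at each level. -/
def Vtree.IsLinear {n : ℕ} (V : Vtree (Fin n)) : Prop := Vtree.IsLinearFrom 0 V

/-! ### Blocking, covers and vtree labellings -/

/-- `C` blocks all paths between `A` and `B` in the graph `G`. -/
def SimpleGraph.BlocksSets {α : Type} (G : SimpleGraph α) (C A B : Set α) : Prop :=
  ∀ ⦃a b : α⦄, a ∈ A → b ∈ B → ∀ p : G.Walk a b, ∃ c ∈ C, c ∈ p.support

/-- A valid labelling of a target vtree `W` with respect to a (tree-shaped) graph `G`,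
where the variable `i` is represented by the vertex `xv i` and `X` is the set of all
variables.  The root is labelled `∅`, each leaf is labelled by the parent (i.e. the
neighbours) of its variable, the label of every inner node covers its variables, and the
labels of the children block their variables from the other labels. -/
structure IsValidLabelling {α ι : Type} [DecidableEq ι] (G : SimpleGraph α) (xv : ι → α)
    (X : Set ι) (W : Vtree ι) (label : Vtree ι → Set α) : Prop where
  root_empty : label W = ∅
  leaf_parent : ∀ x : ι, (Vtree.leaf x).IsSubtreeOf W →
    label (.leaf x) = {p | G.Adj (xv x) p}
  covers : ∀ l r : Vtree ι, (Vtree.node l r).IsSubtreeOf W →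
    G.BlocksSets (label (.node l r))
      (xv '' ((Vtree.node l r).varsFinset : Set ι))
      (xv '' (X \ ((Vtree.node l r).varsFinset : Set ι)))
  blocks_left : ∀ l r : Vtree ι, (Vtree.node l r).IsSubtreeOf W →
    G.BlocksSets (label l) (xv '' (l.varsFinset : Set ι)) (label r ∪ label (.node l r))
  blocks_right : ∀ l r : Vtree ι, (Vtree.node l r).IsSubtreeOf W →
    G.BlocksSets (label r) (xv '' (r.varsFinset : Set ι)) (label l ∪ label (.node l r))

/-! ### The augmented circuit -/

/-- Value types for the augmented circuit: the original variables keep their values, and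
each latent variable `Z_v` (indexed by the vtree node `v`) takes natural number values. -/
@[reducible] def augVal {ι : Type} (Val : ι → Type) : ι ⊕ Vtree ι → Type
  | .inl i => Val i
  | .inr _ => ℕ

/-- Find the subtree of a vtree with the given variable set (if any). -/
def Vtree.findByVars {ι : Type} [DecidableEq ι] : Vtree ι → Finset ι → Option (Vtree ι)
  | .leaf x, S => if S = {x} then some (.leaf x) else none
  | .node l r, S =>
      if S = (Vtree.node l r).varsFinset then some (.node l r)
      else (findByVars l S).orElse fun _ => findByVars r S

/-- The augmented circuit `A_aug` of a structured circuit: each product node `t` with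
scope `X_v` gets an additional leaf child over the latent variable `Z_v`, computing the
indicator function `1[Z_v = idx(t)]`.  (Node `2*i+1` is a copy of node `i` of the original
circuit and node `2*i` is the extra indicator leaf attached to it when `i` is a product.) -/
def PC.augment {ι : Type} {Val : ι → Type} [DecidableEq ι] (C : PC ι Val) (V : Vtree ι) :
    PC (ι ⊕ Vtree ι) (augVal Val) where
  numNodes := 2 * C.numNodes
  node := fun k =>
    if hk : (k : ℕ) % 2 = 1 then
      match C.node ⟨(k : ℕ) / 2, by have := k.isLt; omega⟩ with
      | .leaf v f => .leaf (Sum.inl v) f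
      | .sum ch => .sum (ch.map fun p =>
          ((⟨2 * (p.1 : ℕ) + 1, by have := p.1.isLt; omega⟩ : Fin (2 * C.numNodes)), p.2))
      | .prod ch => .prod ((ch.map fun (j : Fin C.numNodes) =>
          (⟨2 * (j : ℕ) + 1, by have := j.isLt; omega⟩ : Fin (2 * C.numNodes))) ++
          [⟨2 * ((k : ℕ) / 2), by have := k.isLt; omega⟩])
    else
      match C.node ⟨(k : ℕ) / 2, by have := k.isLt; omega⟩ with
      | .prod _ => .leaf
          (Sum.inr ((V.findByVars (PC.scope C ⟨(k : ℕ) / 2, by have := k.isLt; omega⟩)).getD V))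
          (fun m => if m = PC.idxOf C ⟨(k : ℕ) / 2, by have := k.isLt; omega⟩ then 1 else 0)
      | _ => .leaf (Sum.inr V) (fun _ => 1)

/-- Combine an assignment of the observed variables with an assignment of the latent
variables into an assignment for the augmented circuit. -/
def augAssign {ι : Type} {Val : ι → Type} [DecidableEq ι] (V : Vtree ι) (x : ∀ i, Val i)
    (z : ∀ t ∈ V.innerFinset, ℕ) : ∀ s : ι ⊕ Vtree ι, augVal Val s :=
  fun s => match s with
  | .inl i => x i
  | .inr t => if ht : t ∈ V.innerFinset then z t ht else 0

/-- The vtree of the augmented circuit: a new leaf for `Z_v` is attached at each inner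
node `v`. -/
def Vtree.augTree {ι : Type} : Vtree ι → Vtree (ι ⊕ Vtree ι)
  | .leaf x => .leaf (.inl x)
  | .node l r => .node (.leaf (.inr (.node l r))) (.node (augTree l) (augTree r))

/-- `maxCover V S`: the set of ⊆-maximal nodes of the vtree `V` whose covered variables
are contained in `S`. -/
def maxCover {ι : Type} [DecidableEq ι] (V : Vtree ι) (S : Set ι) : Set (Vtree ι) :=
  {t : Vtree ι | t.IsSubtreeOf V ∧ (t.varsFinset : Set ι) ⊆ S ∧
    ∀ u : Vtree ι, u.IsSubtreeOf V → (u.varsFinset : Set ι) ⊆ S → t.IsSubtreeOf u → u = t}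

/-- The interval `{i : Fin n | a ≤ i ≤ b}` of variables. -/
def finInterval (n : ℕ) (a b : ℕ) : Set (Fin n) := {i : Fin n | a ≤ (i : ℕ) ∧ (i : ℕ) ≤ b}

/-! A node of `maxCover V [a,b]` other than the root has a parent that is not contained in
`[a,b]`. By contiguity the parent is an interval meeting `[a,b]` and its complement, so it
contains one of the two boundary variables `X_{a-1}`, `X_{b+1}`. Distinct nodes at one
depth are disjoint, so at each depth at most two parents are possible, each with at most two
children: at most four nodes of `maxCover V [a,b]` per depth. The root lies in `maxCover`
only when it is the whole cover, and otherwise every depth `1, …, d` contributes at most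
four nodes. -/

namespace Vtree

variable {ι : Type}

theorem isSubtreeOf_of_isChildOf {c p : Vtree ι} (h : c.IsChildOf p) : c.IsSubtreeOf p := by
  cases p with
  | leaf x => exact h.elim
  | node l r =>
    rcases h with rfl | rfl
    exacts [.left (.refl _), .right (.refl _)]

theorem ne_of_isChildOf {c p : Vtree ι} (h : c.IsChildOf p) : c ≠ p :=
  fun hcp => (numNodesV_lt_of_isChildOf h).ne (congrArg numNodesV hcp)

theorem encard_setOf_isChildOf_le_two (p : Vtree ι) : {c : Vtree ι | c.IsChildOf p}.encard ≤ 2 := by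
  cases p with
  | leaf x => simp [IsChildOf]
  | node l r =>
    change ({l, r} : Set (Vtree ι)).encard ≤ 2
    refine (Set.encard_insert_le _ _).trans ?_
    rw [Set.encard_singleton]
    rfl

theorem atDepth_zero (V : Vtree ι) : V.atDepth 0 = {V} := by cases V <;> rfl

theorem isSubtreeOf_of_mem_atDepth :
    ∀ {V : Vtree ι} {k : ℕ} {t : Vtree ι}, t ∈ V.atDepth k → t.IsSubtreeOf V
  | V, 0, t, ht => by rw [atDepth_zero] at ht; rw [ht]; exact .refl V
  | .leaf _, _+1, _, ht => ht.elim
  | .node _ _, _+1, _, .inl h => .left (isSubtreeOf_of_mem_atDepth h)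
  | .node _ _, _+1, _, .inr h => .right (isSubtreeOf_of_mem_atDepth h)

theorem exists_isChildOf_of_mem_atDepth_succ :
    ∀ {V : Vtree ι} {k : ℕ} {t : Vtree ι}, t ∈ V.atDepth (k + 1) →
      ∃ p ∈ V.atDepth k, t.IsChildOf p
  | .leaf _, _, _, ht => ht.elim
  | .node l r, 0, t, ht => by
    refine ⟨node l r, by rw [atDepth_zero]; rfl, ?_⟩
    rcases ht with h | h <;> rw [atDepth_zero] at h
    exacts [Or.inl h, Or.inr h]
  | .node _ _, _+1, _, .inl h =>
    let ⟨p, hp, htp⟩ := exists_isChildOf_of_mem_atDepth_succ h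
    ⟨p, .inl hp, htp⟩
  | .node _ _, _+1, _, .inr h =>
    let ⟨p, hp, htp⟩ := exists_isChildOf_of_mem_atDepth_succ h
    ⟨p, .inr hp, htp⟩

theorem eq_or_mem_atDepth_succ_of_isSubtreeOf {t V : Vtree ι} (h : t.IsSubtreeOf V) :
    t = V ∨ ∃ k < V.depthV, t ∈ V.atDepth (k + 1) := by
  induction h with
  | refl => exact .inl rfl
  | left _ ih =>
    right
    rcases ih with rfl | ⟨k, hk, htk⟩
    · exact ⟨0, by simp [depthV], .inl (by rw [atDepth_zero]; rfl)⟩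
    · exact ⟨k + 1, by simp only [depthV]; omega, .inl htk⟩
  | right _ ih =>
    right
    rcases ih with rfl | ⟨k, hk, htk⟩
    · exact ⟨0, by simp [depthV], .inr (by rw [atDepth_zero]; rfl)⟩
    · exact ⟨k + 1, by simp only [depthV]; omega, .inr htk⟩

theorem depthV_pos_of_mem_leavesList {V : Vtree ι} {x y : ι} (hx : x ∈ V.leavesList)
    (hy : y ∈ V.leavesList) (hxy : x ≠ y) : 0 < V.depthV := by
  cases V with
  | leaf z =>
    simp only [leavesList, List.mem_singleton] at hx hy
    exact (hxy (hx.trans hy.symm)).elim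
  | node l r => exact Nat.succ_pos _

section DecidableEq

variable [DecidableEq ι]

theorem mem_varsFinset_iff_mem_leavesList {x : ι} :
    ∀ {t : Vtree ι}, x ∈ t.varsFinset ↔ x ∈ t.leavesList
  | .leaf y => by simp [varsFinset, leavesList]
  | .node l r => by
    simp [varsFinset, leavesList, mem_varsFinset_iff_mem_leavesList (t := l),
      mem_varsFinset_iff_mem_leavesList (t := r)]

theorem varsFinset_nonempty : ∀ t : Vtree ι, t.varsFinset.Nonempty
  | .leaf y => ⟨y, by simp [varsFinset]⟩
  | .node l _ => (varsFinset_nonempty l).mono Finset.subset_union_left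

theorem varsFinset_subset_of_isSubtreeOf {s t : Vtree ι} (h : s.IsSubtreeOf t) :
    s.varsFinset ⊆ t.varsFinset := by
  induction h with
  | refl => exact subset_rfl
  | left _ ih => exact ih.trans Finset.subset_union_left
  | right _ ih => exact ih.trans Finset.subset_union_right

theorem eq_of_mem_atDepth_of_mem_varsFinset :
    ∀ {V : Vtree ι}, V.leavesList.Nodup → ∀ {k : ℕ} {t u : Vtree ι} {x : ι},
      t ∈ V.atDepth k → u ∈ V.atDepth k → x ∈ t.varsFinset → x ∈ u.varsFinset → t = u
  | V, _, 0, t, u, _, ht, hu, _, _ => by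
    rw [atDepth_zero] at ht hu
    exact ht.trans hu.symm
  | .leaf _, _, _+1, _, _, _, ht, _, _, _ => ht.elim
  | .node l r, hnd, k+1, t, u, x, ht, hu, hxt, hxu => by
    rw [leavesList, List.nodup_append] at hnd
    obtain ⟨hl, hr, hdisj⟩ := hnd
    have mem_leavesList {W v : Vtree ι} (hv : v ∈ W.atDepth k) (hx : x ∈ v.varsFinset) :
        x ∈ W.leavesList :=
      mem_varsFinset_iff_mem_leavesList.mp
        (varsFinset_subset_of_isSubtreeOf (isSubtreeOf_of_mem_atDepth hv) hx)
    rcases ht with ht | ht <;> rcases hu with hu | hu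
    · exact eq_of_mem_atDepth_of_mem_varsFinset hl ht hu hxt hxu
    · exact (hdisj x (mem_leavesList ht hxt) x (mem_leavesList hu hxu) rfl).elim
    · exact (hdisj x (mem_leavesList hu hxu) x (mem_leavesList ht hxt) rfl).elim
    · exact eq_of_mem_atDepth_of_mem_varsFinset hr ht hu hxt hxu

def childrenOfNodeCovering (V : Vtree ι) (k : ℕ) (x : ι) : Set (Vtree ι) :=
  {c | ∃ p ∈ V.atDepth k, x ∈ p.varsFinset ∧ c.IsChildOf p}

theorem encard_childrenOfNodeCovering_le {V : Vtree ι} (hnd : V.leavesList.Nodup) (k : ℕ)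
    (x : ι) : (V.childrenOfNodeCovering k x).encard ≤ 2 := by
  rcases Set.eq_empty_or_nonempty (V.childrenOfNodeCovering k x) with h | ⟨-, p, hp, hxp, -⟩
  · simp [h]
  refine le_trans (Set.encard_le_encard ?_) (encard_setOf_isChildOf_le_two p)
  rintro c ⟨q, hq, hxq, hcq⟩
  rwa [eq_of_mem_atDepth_of_mem_varsFinset hnd hq hp hxq hxp] at hcq

theorem not_subset_of_mem_maxCover {V t p : Vtree ι} {S : Set ι} (ht : t ∈ maxCover V S)
    (hp : p.IsSubtreeOf V) (htp : t.IsChildOf p) : ¬ (p.varsFinset : Set ι) ⊆ S :=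
  fun hpS => ne_of_isChildOf htp (ht.2.2 p hp hpS (isSubtreeOf_of_isChildOf htp)).symm

end DecidableEq

end Vtree

open Vtree

def finIntervalBoundary (n a b : ℕ) : Finset (Fin n) :=
  Finset.univ.filter fun z => (z : ℕ) + 1 = a ∨ (z : ℕ) = b + 1

theorem card_finIntervalBoundary_le_two (n a b : ℕ) : (finIntervalBoundary n a b).card ≤ 2 :=
  calc (finIntervalBoundary n a b).card ≤ ({a - 1, b + 1} : Finset ℕ).card :=
        Finset.card_le_card_of_injOn Fin.val
          (fun z hz => by simp [finIntervalBoundary] at hz ⊢; omega) Fin.val_injective.injOn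
    _ ≤ 2 := Finset.card_le_two

theorem IsIntervalFin.exists_mem_finIntervalBoundary {n a b : ℕ} {I : Finset (Fin n)}
    (hI : IsIntervalFin I) {x y : Fin n} (hx : x ∈ I) (hy : y ∈ I)
    (hxS : x ∉ finInterval n a b) (hyS : y ∈ finInterval n a b) :
    ∃ z ∈ finIntervalBoundary n a b, z ∈ I := by
  obtain ⟨c, d, hcd⟩ := hI
  rw [hcd] at hx hy
  simp only [finInterval, Set.mem_ofPred_eq, not_and_or, not_le] at hxS hyS
  have := x.isLt
  have := y.isLt
  rcases hxS with hxa | hbx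
  · exact ⟨⟨a - 1, by omega⟩, by simp [finIntervalBoundary]; omega, (hcd _).mpr (by simp; omega)⟩
  · exact ⟨⟨b + 1, by omega⟩, by simp [finIntervalBoundary], (hcd _).mpr (by simp; omega)⟩

section ContiguousVtree

variable {n a b : ℕ} {V : Vtree (Fin n)}

theorem maxCover_inter_atDepth_succ_subset (hVc : V.ContiguousV) (k : ℕ) :
    maxCover V (finInterval n a b) ∩ V.atDepth (k + 1) ⊆
      ⋃ z ∈ finIntervalBoundary n a b, V.childrenOfNodeCovering k z := by
  rintro t ⟨ht, htk⟩
  obtain ⟨p, hpk, htp⟩ := exists_isChildOf_of_mem_atDepth_succ htk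
  have hpV := isSubtreeOf_of_mem_atDepth hpk
  obtain ⟨x, hxp, hxS⟩ := Set.not_subset.mp (not_subset_of_mem_maxCover ht hpV htp)
  obtain ⟨y, hyt⟩ := varsFinset_nonempty t
  have hyp := varsFinset_subset_of_isSubtreeOf (isSubtreeOf_of_isChildOf htp) hyt
  obtain ⟨z, hz, hzp⟩ := (hVc p hpV).exists_mem_finIntervalBoundary hxp hyp hxS (ht.2.1 hyt)
  exact Set.mem_biUnion hz ⟨p, hpk, hzp, htp⟩

theorem encard_maxCover_inter_atDepth_le_four (hnd : V.leavesList.Nodup)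
    (hVc : V.ContiguousV) (k : ℕ) :
    (maxCover V (finInterval n a b) ∩ V.atDepth k).encard ≤ 4 := by
  cases k with
  | zero =>
    rw [atDepth_zero]
    refine (Set.encard_le_encard Set.inter_subset_right).trans ?_
    simp
  | succ k =>
    calc (maxCover V (finInterval n a b) ∩ V.atDepth (k + 1)).encard
        ≤ (⋃ z ∈ finIntervalBoundary n a b, V.childrenOfNodeCovering k z).encard :=
          Set.encard_le_encard (maxCover_inter_atDepth_succ_subset hVc k)
      _ ≤ ∑ z ∈ finIntervalBoundary n a b, (V.childrenOfNodeCovering k z).encard :=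
          Finset.set_encard_biUnion_le _ _
      _ ≤ ∑ _z ∈ finIntervalBoundary n a b, 2 :=
          Finset.sum_le_sum fun z _ => encard_childrenOfNodeCovering_le hnd k z
      _ ≤ 4 := by
          have := card_finIntervalBoundary_le_two n a b
          simp only [Finset.sum_const, nsmul_eq_mul]
          norm_cast
          omega

theorem encard_maxCover_le (hnd : V.leavesList.Nodup) (hVc : V.ContiguousV)
    (hd : 0 < V.depthV) : (maxCover V (finInterval n a b)).encard ≤ 4 * V.depthV := by
  by_cases hVS : (V.varsFinset : Set (Fin n)) ⊆ finInterval n a b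
  · have hsub : maxCover V (finInterval n a b) ⊆ {V} :=
      fun t ht => (ht.2.2 V (.refl V) hVS ht.1).symm
    refine (Set.encard_le_encard hsub).trans ?_
    rw [Set.encard_singleton]
    norm_cast
    omega
  have hsub : maxCover V (finInterval n a b) ⊆
      ⋃ k ∈ Finset.range V.depthV, maxCover V (finInterval n a b) ∩ V.atDepth (k + 1) := by
    intro t ht
    rcases eq_or_mem_atDepth_succ_of_isSubtreeOf ht.1 with rfl | ⟨k, hk, htk⟩
    · exact (hVS ht.2.1).elim
    · exact Set.mem_biUnion (Finset.mem_range.mpr hk) ⟨ht, htk⟩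
  calc (maxCover V (finInterval n a b)).encard
      ≤ ∑ k ∈ Finset.range V.depthV,
          (maxCover V (finInterval n a b) ∩ V.atDepth (k + 1)).encard :=
        (Set.encard_le_encard hsub).trans (Finset.set_encard_biUnion_le _ _)
    _ ≤ ∑ _k ∈ Finset.range V.depthV, 4 :=
        Finset.sum_le_sum fun k _ => encard_maxCover_inter_atDepth_le_four hnd hVc (k + 1)
    _ = 4 * V.depthV := by simp [mul_comm]

end ContiguousVtree

/-- Let `V` be a contiguous vtree over ordered variables `X₁, …, Xₙ` and
let `[a,b]` be any interval.  Let `C_{a:b}` be the set of ⊆-maximal nodes of `V` whose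
covered interval is contained in `{X_a, …, X_b}`.  Then for every depth level `k` of `V`,
the set `C_{a:b}` contains at most `4` nodes at depth `k`; hence `|C_{a:b}| ≤ 4d` where `d`
is the depth of `V`. -/
theorem statement10 {n : ℕ} (hn : 2 ≤ n) (V : Vtree (Fin n))
    (hV : V.ValidOver Set.univ) (hVc : V.ContiguousV) (a b : ℕ) :
    (∀ k : ℕ, (maxCover V (finInterval n a b) ∩ V.atDepth k).ncard ≤ 4) ∧
      (maxCover V (finInterval n a b)).ncard ≤ 4 * V.depthV := by
  obtain ⟨hnd, hleaves⟩ := hV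
  have hd : 0 < V.depthV :=
    depthV_pos_of_mem_leavesList ((hleaves ⟨0, by omega⟩).mpr trivial)
      ((hleaves ⟨1, by omega⟩).mpr trivial) (by simp [Fin.ext_iff])
  refine ⟨fun k => ENat.toNat_le_of_le_natCast
    (encard_maxCover_inter_atDepth_le_four hnd hVc k), ENat.toNat_le_of_le_natCast ?_⟩
  exact_mod_cast encard_maxCover_le hnd hVc hd
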